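/- arXiv:1012.3140 — 5 statements merged into one kernel-verified Lean document; each statement's English description precedes it below -/
import Mathlib

section
/- Fix κ > 0, σ > 0, δ > 0. For each integer N ≥ 2 let l_N = N(N−1)/κ, let R_N(0) ≥ 0 with sup_N R_N(0) < ∞, and define R_N(t) = σ²δ⁻¹ l_N (1 − exp(−δt/l_N)) + exp(−δt/l_N) R_N(0) for t ≥ 0. If t : ℕ → (0,∞) satisfies t(N) → ∞ and t(N)/N² → 0 as N → ∞, then R_N(t(N)) / (σ² t(N)) → 1 as N → ∞ (slow time scale: initial desynchronization). -/
/-!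
With `x_N = δ t_N / l_N` one has exactly
`R_N(t_N) / (σ² t_N) = (1 - e^{-x_N}) / x_N + e^{-x_N} R_N(0) / (σ² t_N)`.
Since `l_N ≥ N² / (2κ)` and `t_N = o(N²)`, `x_N → 0⁺`, so the first term tends to the derivative
of `x ↦ -e^{-x}` at `0`, which is `1`; the second term is bounded over `t_N → ∞`, hence tends to `0`.
-/

open Real Filter Topology

lemma tendsto_one_sub_exp_neg_div_self :
    Tendsto (fun x : ℝ => (1 - exp (-x)) / x) (𝓝[≠] 0) (𝓝 1) := by
  have h := ((hasDerivAt_neg (0 : ℝ)).exp).tendsto_slope_zero.neg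
  convert h using 2 with x
  · simp only [zero_add, neg_zero, exp_zero, smul_eq_mul]
    ring
  · simp

lemma tendsto_div_atTop_of_isBoundedUnder {ι : Type*} {F : Filter ι} {a b : ι → ℝ}
    (ha : IsBoundedUnder (· ≤ ·) F (fun i => ‖a i‖)) (hb : Tendsto b F atTop) :
    Tendsto (fun i => a i / b i) F (𝓝 0) :=
  isBoundedUnder_le_mul_tendsto_zero ha (tendsto_inv_atTop_zero.comp hb)

lemma sq_le_two_mul_mul_sub_one {x : ℝ} (hx : 2 ≤ x) : x ^ 2 ≤ 2 * (x * (x - 1)) := by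
  nlinarith

lemma tendsto_div_nhdsGT_zero_of_sq_le {t l : ℕ → ℝ} {c : ℝ} (hc : 0 < c)
    (ht : ∀ N, 0 < t N) (hl : ∀ᶠ N : ℕ in atTop, c * (N : ℝ) ^ 2 ≤ l N)
    (hslow : Tendsto (fun N : ℕ => t N / (N : ℝ) ^ 2) atTop (𝓝 0)) :
    Tendsto (fun N => t N / l N) atTop (𝓝[>] 0) := by
  have hl_pos : ∀ᶠ N in atTop, 0 < l N := by
    filter_upwards [hl, eventually_gt_atTop 0] with N hN hN0
    exact (mul_pos hc (by positivity)).trans_le hN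
  refine tendsto_nhdsWithin_of_tendsto_nhds_of_eventually_within _ ?_ ?_
  · refine squeeze_zero' ?_ ?_ (by simpa using hslow.const_mul c⁻¹)
    · filter_upwards [hl_pos] with N hN using (div_pos (ht N) hN).le
    · filter_upwards [hl, eventually_gt_atTop 0] with N hN hN0
      rw [← div_eq_inv_mul, div_div, mul_comm]
      exact div_le_div_of_nonneg_left (ht N).le (by positivity) hN
  · filter_upwards [hl_pos] with N hN using div_pos (ht N) hN

lemma relaxation_div_linear_eq {σ δ L T : ℝ} (R₀ : ℝ) (hσ : σ ≠ 0) (hT : T ≠ 0) :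
    (σ ^ 2 * δ⁻¹ * L * (1 - exp (-δ * T / L)) + exp (-δ * T / L) * R₀) / (σ ^ 2 * T)
      = (1 - exp (-(δ * T / L))) / (δ * T / L) + exp (-(δ * T / L)) * (R₀ / (σ ^ 2 * T)) := by
  rw [neg_mul, neg_div]
  field_simp

/-- slow time scale: initial desynchronization.
With `l_N = N(N−1)/κ` and
`R_N(t) = σ²δ⁻¹ l_N (1 − exp(−δt/l_N)) + exp(−δt/l_N) R_N(0)`,
if `t(N) → ∞` and `t(N)/N² → 0`, then `R_N(t(N)) / (σ² t(N)) → 1`. -/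
theorem stmt_1 (κ σ δ : ℝ) (hκ : 0 < κ) (hσ : 0 < σ) (hδ : 0 < δ)
    (R₀ : ℕ → ℝ) (hR₀ : ∀ N, 2 ≤ N → 0 ≤ R₀ N) (hsup : ∃ C : ℝ, ∀ N, 2 ≤ N → R₀ N ≤ C)
    (l : ℕ → ℝ) (hl : ∀ N : ℕ, 2 ≤ N → l N = (N : ℝ) * ((N : ℝ) - 1) / κ)
    (R : ℕ → ℝ → ℝ)
    (hR : ∀ N : ℕ, 2 ≤ N → ∀ t : ℝ, 0 ≤ t → R N t =
      σ ^ 2 * δ⁻¹ * l N * (1 - Real.exp (-δ * t / l N)) + Real.exp (-δ * t / l N) * R₀ N)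
    (t : ℕ → ℝ) (ht : ∀ N, 0 < t N)
    (htinf : Tendsto t atTop atTop)
    (hslow : Tendsto (fun N : ℕ => t N / (N : ℝ) ^ 2) atTop (nhds 0)) :
    Tendsto (fun N : ℕ => R N (t N) / (σ ^ 2 * t N)) atTop (nhds 1) := by
  obtain ⟨C, hC⟩ := hsup
  have hl_sq : ∀ᶠ N : ℕ in atTop, (2 * κ)⁻¹ * (N : ℝ) ^ 2 ≤ l N := by
    filter_upwards [eventually_ge_atTop 2] with N hN
    rw [hl N hN, inv_mul_eq_div, div_le_div_iff₀ (by positivity) hκ]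
    have hN_sq := sq_le_two_mul_mul_sub_one (x := N) (by exact_mod_cast hN)
    nlinarith [mul_le_mul_of_nonneg_right hN_sq hκ.le]
  set x : ℕ → ℝ := fun N => δ * t N / l N
  have hx : Tendsto x atTop (𝓝[>] 0) :=
    tendsto_div_nhdsGT_zero_of_sq_le (by positivity) (fun N => mul_pos hδ (ht N)) hl_sq
      (by simpa [mul_div_assoc] using hslow.const_mul δ)
  have hR₀_bdd : IsBoundedUnder (· ≤ ·) atTop (fun N => ‖R₀ N‖) := by
    refine isBoundedUnder_of_eventually_le (a := C) ?_
    filter_upwards [eventually_ge_atTop 2] with N hN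
    rw [Real.norm_of_nonneg (hR₀ N hN)]
    exact hC N hN
  have hrate := tendsto_one_sub_exp_neg_div_self.comp (hx.mono_right (nhdsGT_le_nhdsNE 0))
  have hdecay : Tendsto (fun N => exp (-x N)) atTop (𝓝 1) := by
    simpa using (hx.mono_right nhdsWithin_le_nhds).neg.rexp
  have hinit := tendsto_div_atTop_of_isBoundedUnder hR₀_bdd (htinf.const_mul_atTop (pow_pos hσ 2))
  have hsum := hrate.add (hdecay.mul hinit)
  rw [one_mul, add_zero] at hsum
  refine hsum.congr' ?_
  filter_upwards [eventually_ge_atTop 2] with N hN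
  rw [hR N hN (t N) (ht N).le, relaxation_div_linear_eq _ hσ.ne' (ht N).ne']
  rfl
end

section
/- Fix κ > 0, σ > 0, δ > 0 and c > 0. For each integer N ≥ 2 let l_N = N(N−1)/κ, let R_N(0) ≥ 0 with sup_N R_N(0) < ∞, and define R_N(t) = σ²δ⁻¹ l_N (1 − exp(−δt/l_N)) + exp(−δt/l_N) R_N(0) for t ≥ 0. If t(N) = cN²/(κδ), then R_N(t(N)) / (σ² t(N)) → (1 − e^{−c})/c as N → ∞ (critical time scale: critical slowdown of desynchronization). -/
/-!
Write `a = δt/l_N` for the relaxation exponent. Dividing the explicit formula by `σ²t` gives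
`R_N(t) / (σ²t) = (1 − e^{−a}) / a + e^{−a} R_N(0) / (σ²t)`.
On the critical scale `t(N) = cN²/(κδ)` the exponent is `a_N = c · N/(N−1) → c`, so the first
term tends to `(1 − e^{−c})/c` by continuity, while the second is a bounded quantity divided by
`σ²t(N) → ∞`.
-/

open Real Filter Topology

lemma relaxation_div_eq {σ δ l t r : ℝ} (hσ : σ ≠ 0) :
    (σ ^ 2 * δ⁻¹ * l * (1 - exp (-δ * t / l)) + exp (-δ * t / l) * r) / (σ ^ 2 * t) =
      (1 - exp (-(δ * t / l))) / (δ * t / l) + (σ ^ 2 * t)⁻¹ * (exp (-(δ * t / l)) * r) := by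
  rw [neg_mul, neg_div, add_div, div_div_eq_mul_div, inv_mul_eq_div]
  congr 1
  field_simp

lemma tendsto_one_sub_exp_neg_div {c : ℝ} (hc : c ≠ 0) :
    Tendsto (fun a => (1 - exp (-a)) / a) (𝓝 c) (𝓝 ((1 - exp (-c)) / c)) :=
  ((continuous_const.sub (continuous_exp.comp continuous_neg)).continuousAt.div
    continuousAt_id hc).tendsto

lemma critical_exponent_eq {κ δ c N : ℝ} (hκ : κ ≠ 0) (hδ : δ ≠ 0) (hN : N ≠ 0)
    (hN₁ : N - 1 ≠ 0) :
    δ * (c * N ^ 2 / (κ * δ)) / (N * (N - 1) / κ) = c * (N / (N + -1)) := by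
  rw [← sub_eq_add_neg]
  field_simp

/-- critical time scale: critical slowdown of desynchronization.
With `l_N = N(N−1)/κ`,
`R_N(t) = σ²δ⁻¹ l_N (1 − exp(−δt/l_N)) + exp(−δt/l_N) R_N(0)` and
`t(N) = cN²/(κδ)`, one has `R_N(t(N)) / (σ² t(N)) → (1 − e^{−c})/c`. -/
theorem stmt_2 (κ σ δ c : ℝ) (hκ : 0 < κ) (hσ : 0 < σ) (hδ : 0 < δ) (hc : 0 < c)
    (R₀ : ℕ → ℝ) (hR₀ : ∀ N, 2 ≤ N → 0 ≤ R₀ N) (hsup : ∃ C : ℝ, ∀ N, 2 ≤ N → R₀ N ≤ C)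
    (l : ℕ → ℝ) (hl : ∀ N : ℕ, 2 ≤ N → l N = (N : ℝ) * ((N : ℝ) - 1) / κ)
    (R : ℕ → ℝ → ℝ)
    (hR : ∀ N : ℕ, 2 ≤ N → ∀ t : ℝ, 0 ≤ t → R N t =
      σ ^ 2 * δ⁻¹ * l N * (1 - Real.exp (-δ * t / l N)) + Real.exp (-δ * t / l N) * R₀ N)
    (t : ℕ → ℝ) (ht : ∀ N : ℕ, t N = c * (N : ℝ) ^ 2 / (κ * δ)) :
    Tendsto (fun N : ℕ => R N (t N) / (σ ^ 2 * t N)) atTop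
      (nhds ((1 - Real.exp (-c)) / c)) := by
  obtain ⟨C, hC⟩ := hsup
  have hexponent : Tendsto (fun N => δ * t N / l N) atTop (𝓝 c) := by
    have h := (tendsto_natCast_div_add_atTop (-1 : ℝ)).const_mul c
    rw [mul_one] at h
    refine h.congr' ?_
    filter_upwards [eventually_ge_atTop 2] with N hN
    have hN' : (2 : ℝ) ≤ N := by exact_mod_cast hN
    rw [ht, hl N hN, critical_exponent_eq hκ.ne' hδ.ne' (by linarith) (by linarith)]
  have htime : Tendsto (fun N => σ ^ 2 * t N) atTop atTop := by
    simp_rw [ht, mul_div_right_comm c, ← mul_assoc]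
    exact ((tendsto_pow_atTop two_ne_zero).comp tendsto_natCast_atTop_atTop).const_mul_atTop
      (by positivity)
  have hbounded : IsBoundedUnder (· ≤ ·) atTop
      (fun N => ‖exp (-(δ * t N / l N)) * R₀ N‖) := by
    refine ⟨C, eventually_map.2 ?_⟩
    filter_upwards [eventually_ge_atTop 2, hexponent.eventually (lt_mem_nhds hc)]
      with N hN ha
    rw [Real.norm_of_nonneg (by have := hR₀ N hN; positivity)]
    calc exp (-(δ * t N / l N)) * R₀ N ≤ 1 * R₀ N :=
          mul_le_mul_of_nonneg_right (exp_le_one_iff.2 (by linarith)) (hR₀ N hN)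
      _ ≤ C := (one_mul _).trans_le (hC N hN)
  have hlim := ((tendsto_one_sub_exp_neg_div hc.ne').comp hexponent).add
    ((tendsto_inv_atTop_zero.comp htime).zero_mul_isBoundedUnder_le hbounded)
  rw [add_zero] at hlim
  refine hlim.congr' ?_
  filter_upwards [eventually_ge_atTop 2] with N hN
  rw [hR N hN _ (by rw [ht]; positivity), relaxation_div_eq hσ.ne']
  rfl
end

section
/- Let N ≥ 2 and x ∈ ℝ^N. For an ordered pair of distinct indices (i,j), i,j ∈ {1,…,N}, i ≠ j, let x^{(i,j)} ∈ ℝ^N be the configuration obtained from x by the synchronizing jump (x_i, x_j) → (x_i, x_i), i.e. (x^{(i,j)})_j = x_i and (x^{(i,j)})_m = x_m for m ≠ j. Then the average of the empirical variance over all N(N−1) ordered pairs satisfies (1/(N(N−1))) Σ_{(i,j): i≠j} V(x^{(i,j)}) = (1 − 2/(N(N−1))) V(x). -/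
open Finset

/-- Center of mass of a configuration `x ∈ ℝ^N`. -/
noncomputable def centerOfMass {N : ℕ} (x : Fin N → ℝ) : ℝ :=
  (∑ m, x m) / N

/-- Empirical variance `V(x) = (1/(N−1)) Σ (x_m − M(x))²`. -/
noncomputable def empVar {N : ℕ} (x : Fin N → ℝ) : ℝ :=
  (∑ m, (x m - centerOfMass x) ^ 2) / ((N : ℝ) - 1)

/-!
Write `D(x) = ∑ a, ∑ b, (x a - x b)²`, so that `V(x) = D(x) / (2N(N-1))`. Replacing `x j` by `c`
changes `D` by `2 ∑ b, ((c - x b)² - (x j - x b)²) - 2 (c - x j)²`. Summing over all ordered pairs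
with `c = x i`, the first term cancels under the symmetry `i ↔ j` and the second sums to `2 D(x)`,
so `∑ i, ∑ j, D(x^{(i,j)}) = (N² - 2) D(x)`; the `N` diagonal terms equal `D(x)`, which leaves
`(N(N-1) - 2) D(x)` for the off-diagonal pairs.
-/

section

variable {ι : Type*} [Fintype ι]

def sqDiffSum (x : ι → ℝ) : ℝ := ∑ a, ∑ b, (x a - x b) ^ 2

theorem sqDiffSum_eq (x : ι → ℝ) :
    sqDiffSum x = 2 * Fintype.card ι * ∑ a, x a ^ 2 - 2 * (∑ a, x a) ^ 2 := by
  simp only [sqDiffSum, sub_sq, sum_add_distrib, sum_sub_distrib, sum_const, card_univ,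
    nsmul_eq_mul, ← mul_sum, ← sum_mul]
  ring

theorem sum_comp_update [DecidableEq ι] (f : ℝ → ℝ) (x : ι → ℝ) (j : ι) (c : ℝ) :
    ∑ a, f (Function.update x j c a) = ∑ a, f (x a) - f (x j) + f c := by
  simp only [Function.apply_update (fun _ => f), sum_update_of_mem (mem_univ j),
    sum_sdiff_eq_sub (subset_univ {j}), sum_singleton]
  ring

theorem sqDiffSum_update [DecidableEq ι] (x : ι → ℝ) (j : ι) (c : ℝ) :
    sqDiffSum (Function.update x j c) =
      sqDiffSum x + 2 * ∑ b, ((c - x b) ^ 2 - (x j - x b) ^ 2) - 2 * (c - x j) ^ 2 := by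
  have hsum := sum_comp_update id x j c
  have hsumSq := sum_comp_update (· ^ 2) x j c
  simp only [id] at hsum hsumSq
  rw [sqDiffSum_eq, sqDiffSum_eq, hsum, hsumSq]
  simp only [sub_sq, sum_add_distrib, sum_sub_distrib, sum_const, card_univ,
    nsmul_eq_mul, ← mul_sum]
  ring

theorem sum_sum_sqDiffSum_update [DecidableEq ι] (x : ι → ℝ) :
    ∑ i, ∑ j, sqDiffSum (Function.update x j (x i)) =
      ((Fintype.card ι : ℝ) ^ 2 - 2) * sqDiffSum x := by
  have hswap : ∑ i : ι, ∑ j : ι, ∑ b, (x j - x b) ^ 2 = ∑ i : ι, ∑ j : ι, ∑ b, (x i - x b) ^ 2 :=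
    sum_comm
  simp only [sqDiffSum_update, sum_add_distrib, sum_sub_distrib, ← mul_sum, hswap, sub_self,
    mul_zero, add_zero, sum_const, card_univ, nsmul_eq_mul]
  rw [← sqDiffSum]
  ring

theorem sum_filter_fst_ne_snd {M : Type*} [AddCommGroup M] [DecidableEq ι] (f : ι × ι → M) :
    ∑ p ∈ univ.filter (fun p : ι × ι => p.1 ≠ p.2), f p = ∑ i, ∑ j, f (i, j) - ∑ i, f (i, i) := by
  rw [eq_sub_iff_add_eq, ← Fintype.sum_prod_type', ← sum_filter_add_sum_filter_not univ
    (fun p : ι × ι => p.1 ≠ p.2)]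
  have hdiag : univ.filter (fun p : ι × ι => ¬p.1 ≠ p.2) = (univ : Finset ι).diag := by
    ext p
    simp [mem_diag]
  rw [hdiag, sum_diag]

end

theorem two_mul_mul_sum_sq_sub_centerOfMass {N : ℕ} (x : Fin N → ℝ) :
    2 * N * ∑ m, (x m - centerOfMass x) ^ 2 = sqDiffSum x := by
  rcases Nat.eq_zero_or_pos N with rfl | hN
  · simp [sqDiffSum]
  rw [sqDiffSum_eq, centerOfMass]
  simp only [sub_sq, sum_add_distrib, sum_sub_distrib, sum_const, card_univ,
    nsmul_eq_mul, ← mul_sum, ← sum_mul, Fintype.card_fin]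
  field_simp
  ring

theorem empVar_eq_sqDiffSum {N : ℕ} (x : Fin N → ℝ) :
    empVar x = sqDiffSum x / (2 * N * (N - 1)) := by
  rw [empVar, ← two_mul_mul_sum_sq_sub_centerOfMass]
  rcases Nat.eq_zero_or_pos N with rfl | hN
  · simp
  rw [mul_div_mul_left _ _ (by positivity : (2 * N : ℝ) ≠ 0)]

/-- contraction lemma for pairwise synchronization.
For a configuration `x ∈ ℝ^N`, `N ≥ 2`, the average of the empirical variance
over all `N(N−1)` configurations obtained by a synchronizing jump
`(x_i, x_j) → (x_i, x_i)` (for an ordered pair `i ≠ j`) equals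
`(1 − 2/(N(N−1))) V(x)`. -/
theorem stmt_7 (N : ℕ) (hN : 2 ≤ N) (x : Fin N → ℝ) :
    (1 / ((N : ℝ) * ((N : ℝ) - 1))) *
      ∑ p ∈ Finset.univ.filter (fun p : Fin N × Fin N => p.1 ≠ p.2),
        empVar (Function.update x p.2 (x p.1))
    = (1 - 2 / ((N : ℝ) * ((N : ℝ) - 1))) * empVar x := by
  have hN2 : (2 : ℝ) ≤ N := by exact_mod_cast hN
  have hN0 : (N : ℝ) ≠ 0 := by linarith
  have hN1 : (N : ℝ) - 1 ≠ 0 := by linarith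
  have hsum : ∑ p ∈ univ.filter (fun p : Fin N × Fin N => p.1 ≠ p.2),
      empVar (Function.update x p.2 (x p.1)) =
      ((N : ℝ) ^ 2 - N - 2) * sqDiffSum x / (2 * N * (N - 1)) := by
    rw [sum_filter_fst_ne_snd]
    simp only [Function.update_eq_self, empVar_eq_sqDiffSum, ← sum_div, sum_sum_sqDiffSum_update,
      sum_const, card_univ, Fintype.card_fin, nsmul_eq_mul]
    ring
  rw [hsum, empVar_eq_sqDiffSum]
  field_simp
end

section
/- Let l ≥ 1 and let a signature (k_1,…,k_l) of integers k_j ≥ 2 be given, with k = k_1 + ⋯ + k_l, and let N ≥ k. For an injective tuple I = (i_1,…,i_k) of indices in {1,…,N}, partition the positions 1,…,k into consecutive blocks B_1,…,B_l of sizes k_1,…,k_l, let g_j = i_{k_1+⋯+k_{j−1}+1} be the leader index of block j, and define the synchronized configuration J_I x ∈ ℝ^N by (J_I x)_m = x_{g_j} if m = i_p for some p ∈ B_j, and (J_I x)_m = x_m if m is not among i_1,…,i_k. Then the average of V(J_I x) over all N(N−1)⋯(N−k+1) injective tuples I equals (1 − κ/(N(N−1))) V(x), where κ = Σ_{j=1}^l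 k_j² − k. -/
/-!
Let `L` be the leader map of the signature on positions and `c r = #{p | L p = r} - 1`. For an
injective tuple `I`, the configuration `J_I x` differs from `x` only on the range of `I`, so
`∑ m, f ((J_I x) m) = ∑ m, f (x m) + ∑ r, c r * f (x (I r))` for every `f`. Since `Perm (Fin N)`
acts transitively on injective tuples, averaging over them makes `x (I r)` uniform on the
coordinates and `(x (I r), x (I s))`, `r ≠ s`, uniform on pairs of distinct coordinates. As
`∑ r, c r = 0`, the terms linear in `c` average out, and the mean square of `∑ r, c r * x (I r)`
is `V(x) * ∑ r, c r ^ 2`. Each block of size `k_j` contributes `(k_j - 1) ^ 2 + (k_j - 1)` to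
`∑ r, c r ^ 2`, which is therefore `κ`.
-/

open Finset

/-- `offset ks j = k_1 + ⋯ + k_{j-1}`: the first position (0-based) of the
`j`-th consecutive block in a signature `(k_1,…,k_l)`. -/
def offset {l : ℕ} (ks : Fin l → ℕ) (j : Fin l) : ℕ :=
  ∑ j' ∈ Finset.univ.filter (fun j' => j' < j), ks j'

/-- The index of the block containing position `p`: the largest `j` whose
block starts at or before `p`. -/
def blockOf {l : ℕ} (hl : 0 < l) (ks : Fin l → ℕ) (p : ℕ) : Fin l :=
  (Finset.univ.filter (fun j => offset ks j ≤ p)).max'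
    ⟨⟨0, hl⟩, by
      simp only [Finset.mem_filter, Finset.mem_univ, true_and]
      have : offset ks ⟨0, hl⟩ = 0 := by
        unfold offset
        apply Finset.sum_eq_zero
        intro j' hj'
        simp [Fin.lt_def] at hj'
      rw [this]
      exact Nat.zero_le _⟩

/-- The position of the leader of the block containing position `p`
(the first position of that block). -/
def leaderPos {l : ℕ} (hl : 0 < l) (ks : Fin l → ℕ)
    (p : Fin (∑ j, ks j)) : Fin (∑ j, ks j) :=
  ⟨offset ks (blockOf hl ks p.val), by
    have hmem : blockOf hl ks p.val ∈
        Finset.univ.filter (fun j => offset ks j ≤ p.val) :=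
      Finset.max'_mem _ _
    exact lt_of_le_of_lt (Finset.mem_filter.mp hmem).2 p.isLt⟩

/-- The synchronizing map `J_I` of signature `(k_1,…,k_l)` attached to the
tuple `I = (i_1,…,i_k)`: every particle whose index occurs in `I` jumps to
the position of the leader of its block; all other particles stay put. -/
noncomputable def syncMap {l : ℕ} (hl : 0 < l) (ks : Fin l → ℕ) {N : ℕ}
    (I : Fin (∑ j, ks j) → Fin N) (x : Fin N → ℝ) : Fin N → ℝ :=
  fun m => if h : ∃ p, I p = m then x (I (leaderPos hl ks h.choose)) else x m

open Function

section Embedding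

variable {α β γ M : Type*} [Fintype α] [Fintype β] [Fintype γ] [DecidableEq γ] [AddCommMonoid M]

theorem card_perm_nsmul_sum_embedding (g : (α ↪ γ) → M) :
    Fintype.card (Equiv.Perm γ) • ∑ F : α ↪ γ, g F =
      ∑ F : α ↪ γ, ∑ σ : Equiv.Perm γ, g (F.trans σ.toEmbedding) := by
  rw [← card_univ, ← sum_const, eq_comm, sum_comm]
  exact sum_congr rfl fun σ _ =>
    Fintype.sum_equiv (Equiv.embeddingCongr (Equiv.refl α) σ) _ _ fun _ => rfl

theorem sum_perm_embedding_trans_eq (g : (α ↪ γ) → M) (F F' : α ↪ γ) :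
    ∑ σ : Equiv.Perm γ, g (F.trans σ.toEmbedding) =
      ∑ σ : Equiv.Perm γ, g (F'.trans σ.toEmbedding) := by
  obtain ⟨τ, hτ⟩ := Equiv.Perm.exists_extending_pair F' F F'.injective F.injective
  refine Fintype.sum_equiv (Equiv.mulRight τ) _ _ fun σ => ?_
  congr 1
  ext a
  simp [hτ]

/-- Averaged over `Perm γ`, both sides become sums of orbit sums `∑ σ, g (F.trans σ)`, which do not
depend on `F` because `Perm γ` acts transitively on `α ↪ γ`. -/
theorem card_embedding_nsmul_sum_trans [IsAddTorsionFree M] (e : α ↪ β) (g : (α ↪ γ) → M) :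
    Fintype.card (α ↪ γ) • ∑ E : β ↪ γ, g (e.trans E) =
      Fintype.card (β ↪ γ) • ∑ F : α ↪ γ, g F := by
  apply IsAddTorsionFree.nsmul_right_injective (Fintype.card_ne_zero (α := Equiv.Perm γ))
  simp only
  rw [smul_comm, card_perm_nsmul_sum_embedding, smul_comm, card_perm_nsmul_sum_embedding,
    ← card_univ, ← sum_const, ← card_univ, ← sum_const, sum_comm]
  exact sum_congr rfl fun E _ => sum_congr rfl fun F _ =>
    sum_perm_embedding_trans_eq g (e.trans E) F

theorem card_nsmul_sum_embedding_apply [IsAddTorsionFree M] (b : β) (f : γ → M) :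
    Fintype.card γ • ∑ E : β ↪ γ, f (E b) = Fintype.card (β ↪ γ) • ∑ c, f c := by
  rw [← Fintype.card_embedding_eq_of_unique (α := Unit)]
  refine (card_embedding_nsmul_sum_trans (Embedding.punit b) fun F : Unit ↪ γ => f (F ())).trans ?_
  exact congrArg _ (Fintype.sum_equiv Equiv.uniqueEmbeddingEquivResult _ _ fun _ => rfl)

theorem card_nsmul_sum_embedding_apply_apply [IsAddTorsionFree M] {r s : β} (hrs : r ≠ s)
    (f : γ → γ → M) :
    (Fintype.card γ).descFactorial 2 • ∑ E : β ↪ γ, f (E r) (E s) =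
      Fintype.card (β ↪ γ) • ∑ p ∈ univ.offDiag, f p.1 p.2 := by
  rw [← Fintype.card_fin 2, ← Fintype.card_embedding_eq]
  refine (card_embedding_nsmul_sum_trans (Embedding.embFinTwo hrs) fun F => f (F 0) (F 1)).trans ?_
  refine congrArg _ ((Fintype.sum_equiv Embedding.twoEmbeddingEquiv _ (fun p => f p.1.1 p.1.2)
    fun _ => rfl).trans ?_)
  exact sum_subtype _ (by simp) (fun p : γ × γ => f p.1 p.2) |>.symm

end Embedding

section Moments

variable {β γ : Type*} [Fintype β] [Fintype γ] [DecidableEq γ]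

theorem sum_offDiag_mul (x : γ → ℝ) :
    ∑ p ∈ univ.offDiag, x p.1 * x p.2 = (∑ m, x m) ^ 2 - ∑ m, x m ^ 2 := by
  rw [sq, sum_mul_sum, ← sum_product', ← diag_union_offDiag, sum_union (disjoint_diag_offDiag _)]
  simp [sq]

theorem card_mul_card_sub_one_mul_sum_embedding_mul [DecidableEq β] (x : γ → ℝ) (r s : β) :
    (Fintype.card γ : ℝ) * (Fintype.card γ - 1) * ∑ E : β ↪ γ, x (E r) * x (E s) =
      Fintype.card (β ↪ γ) * ((∑ m, x m) ^ 2 - ∑ m, x m ^ 2 +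
        if r = s then Fintype.card γ * ∑ m, x m ^ 2 - (∑ m, x m) ^ 2 else 0) := by
  rcases eq_or_ne r s with rfl | hrs
  · have h := card_nsmul_sum_embedding_apply r fun c => x c ^ 2
    rw [nsmul_eq_mul, nsmul_eq_mul] at h
    simp only [← sq, if_pos, mul_right_comm _ _ (∑ E : β ↪ γ, _), h]
    ring
  · have h := card_nsmul_sum_embedding_apply_apply hrs fun c d => x c * x d
    rw [nsmul_eq_mul, nsmul_eq_mul, Nat.cast_descFactorial_two, sum_offDiag_mul] at h
    rw [h, if_neg hrs, add_zero]

theorem card_mul_card_sub_one_mul_sum_embedding_sq [DecidableEq β] {c : β → ℝ}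
    (hc : ∑ r, c r = 0) (x : γ → ℝ) :
    (Fintype.card γ : ℝ) * (Fintype.card γ - 1) * ∑ E : β ↪ γ, (∑ r, c r * x (E r)) ^ 2 =
      Fintype.card (β ↪ γ) * (∑ r, c r ^ 2) *
        (Fintype.card γ * ∑ m, x m ^ 2 - (∑ m, x m) ^ 2) := by
  calc _ = ∑ r, ∑ s, c r * c s * ((Fintype.card γ : ℝ) * (Fintype.card γ - 1) *
        ∑ E : β ↪ γ, x (E r) * x (E s)) := by
        simp_rw [sq, sum_mul_sum, mul_sum]
        rw [sum_comm]
        refine sum_congr rfl fun r _ => ?_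
        rw [sum_comm]
        exact sum_congr rfl fun s _ => sum_congr rfl fun E _ => by ring
    _ = _ := by
        simp only [card_mul_card_sub_one_mul_sum_embedding_mul, mul_add, sum_add_distrib, mul_ite,
          mul_zero, sum_ite_eq, mem_univ, if_true, ← sum_mul, ← mul_sum, hc, sum_const_zero, ← sq]
        ring

theorem card_mul_sum_embedding_sum_mul_eq_zero {c : β → ℝ} (hc : ∑ r, c r = 0) (f : γ → ℝ) :
    (Fintype.card γ : ℝ) * ∑ E : β ↪ γ, ∑ r, c r * f (E r) = 0 := by
  have h (r : β) : (Fintype.card γ : ℝ) * ∑ E : β ↪ γ, c r * f (E r) =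
      c r * (Fintype.card (β ↪ γ) * ∑ m, f m) := by
    rw [← mul_sum, mul_left_comm, ← nsmul_eq_mul, card_nsmul_sum_embedding_apply, nsmul_eq_mul]
  rw [sum_comm, mul_sum, sum_congr rfl fun r _ => h r, ← sum_mul, hc, zero_mul]

end Moments

section NetInflow

variable {ι : Type*} [Fintype ι] [DecidableEq ι]

def netInflow (L : ι → ι) (r : ι) : ℝ :=
  #{p | L p = r} - 1

theorem sum_netInflow_mul (L : ι → ι) (g : ι → ℝ) :
    ∑ r, netInflow L r * g r = ∑ p, (g (L p) - g p) := by
  simp only [netInflow, sub_mul, one_mul, sum_sub_distrib, ← sum_fiberwise' univ L g]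
  simp

theorem sum_netInflow (L : ι → ι) : ∑ r, netInflow L r = 0 := by
  simpa using sum_netInflow_mul L 1

theorem sum_netInflow_sq (L : ι → ι) :
    ∑ r, netInflow L r ^ 2 = ∑ p, (#{q | L q = L p} : ℝ) - Fintype.card ι := by
  simp only [sq]
  rw [sum_netInflow_mul]
  simp only [netInflow, sub_sub_sub_cancel_right, sum_sub_distrib]
  congr 1
  exact_mod_cast (card_eq_sum_card_fiberwise fun q _ => mem_univ (L q)).symm

end NetInflow

section Blocks

variable {l : ℕ} (hl : 0 < l) (ks : Fin l → ℕ)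

theorem offset_eq_sum_Iio (j : Fin l) : offset ks j = ∑ j' ∈ Iio j, ks j' := by
  rw [offset, filter_gt_eq_Iio]

theorem offset_add_self (j : Fin l) : offset ks j + ks j = ∑ j' ∈ Iic j, ks j' := by
  rw [Iic_eq_cons_Iio, sum_cons, offset_eq_sum_Iio, add_comm]

theorem offset_add_le_offset {j j' : Fin l} (h : j < j') : offset ks j + ks j ≤ offset ks j' := by
  rw [offset_add_self, offset_eq_sum_Iio]
  exact sum_le_sum_of_subset fun i hi => mem_Iio.2 ((mem_Iic.1 hi).trans_lt h)

theorem offset_blockOf_le (p : ℕ) : offset ks (blockOf hl ks p) ≤ p := by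
  unfold blockOf
  exact (mem_filter.1 (max'_mem (univ.filter fun j => offset ks j ≤ p) _)).2

theorem le_blockOf {p : ℕ} {j : Fin l} (h : offset ks j ≤ p) : j ≤ blockOf hl ks p :=
  le_max' _ _ (by simp [h])

theorem lt_offset_blockOf_add {p : ℕ} (hp : p < ∑ j, ks j) :
    p < offset ks (blockOf hl ks p) + ks (blockOf hl ks p) := by
  set b := blockOf hl ks p
  rw [offset_add_self]
  by_cases hb : b.val + 1 < l
  · have hIic : Iic b = Iio ⟨b + 1, hb⟩ := by
      ext j; simp only [mem_Iic, mem_Iio, Fin.le_def, Fin.lt_def]; omega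
    rw [hIic, ← offset_eq_sum_Iio]
    by_contra! h
    have := le_blockOf hl ks h
    simp [b, Fin.le_def] at this
  · have hIic : Iic b = univ := by
      ext j; simp only [mem_Iic, mem_univ, iff_true, Fin.le_def]; omega
    rwa [hIic]

theorem blockOf_eq_iff {p : ℕ} (hp : p < ∑ j, ks j) {j : Fin l} :
    blockOf hl ks p = j ↔ offset ks j ≤ p ∧ p < offset ks j + ks j := by
  refine ⟨fun h => h ▸ ⟨offset_blockOf_le hl ks p, lt_offset_blockOf_add hl ks hp⟩,
    fun ⟨h₁, h₂⟩ => le_antisymm ?_ (le_blockOf hl ks h₁)⟩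
  by_contra! h
  have := offset_add_le_offset ks h
  have := offset_blockOf_le hl ks p
  omega

theorem card_blockOf_eq (j : Fin l) :
    #{p : Fin (∑ j, ks j) | blockOf hl ks p = j} = ks j := by
  have hle : offset ks j + ks j ≤ ∑ j, ks j := by
    rw [offset_add_self]; exact sum_le_sum_of_subset (subset_univ _)
  rw [← card_map Fin.valEmbedding, ← Nat.add_sub_cancel_left (n := offset ks j) (m := ks j),
    ← Nat.card_Ico]
  congr 1
  ext i
  simp only [mem_map, mem_filter, mem_univ, true_and, Fin.valEmbedding_apply, mem_Ico]
  constructor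
  · rintro ⟨p, hp, rfl⟩; exact (blockOf_eq_iff hl ks p.isLt).1 hp
  · intro hi; exact ⟨⟨i, by omega⟩, (blockOf_eq_iff hl ks (by omega)).2 hi, rfl⟩

theorem blockOf_leaderPos (p : Fin (∑ j, ks j)) :
    blockOf hl ks (leaderPos hl ks p) = blockOf hl ks p := by
  have h := lt_offset_blockOf_add hl ks p.isLt
  have := offset_blockOf_le hl ks p
  exact (blockOf_eq_iff hl ks (leaderPos hl ks p).isLt).2 ⟨le_rfl, by simp [leaderPos]; omega⟩

theorem leaderPos_eq_leaderPos_iff {p q : Fin (∑ j, ks j)} :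
    leaderPos hl ks p = leaderPos hl ks q ↔ blockOf hl ks p = blockOf hl ks q := by
  refine ⟨fun h => ?_, fun h => Fin.ext (by simp [leaderPos, h])⟩
  rw [← blockOf_leaderPos hl ks p, ← blockOf_leaderPos hl ks q, h]

theorem sum_netInflow_leaderPos_sq :
    ∑ r, netInflow (leaderPos hl ks) r ^ 2 = ∑ j, (ks j : ℝ) ^ 2 - ((∑ j, ks j : ℕ) : ℝ) := by
  rw [sum_netInflow_sq, Fintype.card_fin]
  congr 1
  simp_rw [leaderPos_eq_leaderPos_iff, card_blockOf_eq]
  rw [← sum_fiberwise' univ (fun p : Fin (∑ j, ks j) => blockOf hl ks p) fun j => (ks j : ℝ)]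
  simp [card_blockOf_eq, sq]

end Blocks

section Variance

variable {N : ℕ}

theorem empVar_of_le_one (hN : N ≤ 1) (y : Fin N → ℝ) : empVar y = 0 := by
  interval_cases N <;> simp [empVar]

theorem empVar_eq_div (hN : 1 < N) (y : Fin N → ℝ) :
    empVar y = (N * ∑ m, y m ^ 2 - (∑ m, y m) ^ 2) / (N * (N - 1)) := by
  have hN₀ : (N : ℝ) ≠ 0 := by positivity
  have hN₁ : (N : ℝ) - 1 ≠ 0 := sub_ne_zero.2 (by exact_mod_cast hN.ne')
  simp only [empVar, centerOfMass, sub_sq, sum_add_distrib, sum_sub_distrib, ← sum_mul, ← mul_sum,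
    sum_const, card_univ, Fintype.card_fin, nsmul_eq_mul]
  field_simp
  ring

end Variance

section SyncMap

variable {l : ℕ} (hl : 0 < l) (ks : Fin l → ℕ) {N : ℕ}

theorem syncMap_apply_apply {I : Fin (∑ j, ks j) → Fin N} (hI : Injective I) (x : Fin N → ℝ)
    (p : Fin (∑ j, ks j)) : syncMap hl ks I x (I p) = x (I (leaderPos hl ks p)) := by
  have h : ∃ q, I q = I p := ⟨p, rfl⟩
  rw [syncMap, dif_pos h, hI h.choose_spec]

theorem syncMap_apply_of_notMem_range {I : Fin (∑ j, ks j) → Fin N} {m : Fin N}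
    (hm : m ∉ Set.range I) (x : Fin N → ℝ) : syncMap hl ks I x m = x m :=
  dif_neg hm

theorem sum_syncMap {I : Fin (∑ j, ks j) → Fin N} (hI : Injective I) (x : Fin N → ℝ)
    (f : ℝ → ℝ) : ∑ m, f (syncMap hl ks I x m) =
      ∑ m, f (x m) + ∑ r, netInflow (leaderPos hl ks) r * f (x (I r)) := by
  rw [sum_netInflow_mul, ← sub_eq_iff_eq_add', ← sum_sub_distrib, eq_comm]
  refine Fintype.sum_of_injective I hI _ _ (fun m hm => ?_) (fun p => ?_)
  · rw [syncMap_apply_of_notMem_range hl ks hm, sub_self]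
  · rw [syncMap_apply_apply hl ks hI]

end SyncMap

section Average

variable {l : ℕ} (hl : 0 < l) (ks : Fin l → ℕ) {N : ℕ}

theorem sum_embedding_empVar_syncMap (x : Fin N → ℝ) :
    ∑ E : Fin (∑ j, ks j) ↪ Fin N, empVar (syncMap hl ks E x) =
      Fintype.card (Fin (∑ j, ks j) ↪ Fin N) *
        (1 - (∑ r, netInflow (leaderPos hl ks) r ^ 2) / (N * (N - 1))) * empVar x := by
  rcases le_or_gt N 1 with hN | hN
  · simp [empVar_of_le_one hN]
  set c := netInflow (leaderPos hl ks)
  have hc : ∑ r, c r = 0 := sum_netInflow (leaderPos hl ks)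
  have hsq := card_mul_card_sub_one_mul_sum_embedding_sq hc x
  have hlin := card_mul_sum_embedding_sum_mul_eq_zero hc x
  have hquad := card_mul_sum_embedding_sum_mul_eq_zero hc fun m => x m ^ 2
  simp only [Fintype.card_fin] at hsq hlin hquad
  have hE (E : Fin (∑ j, ks j) ↪ Fin N) : empVar (syncMap hl ks E x) =
      (N * (∑ m, x m ^ 2 + ∑ r, c r * x (E r) ^ 2) - (∑ m, x m + ∑ r, c r * x (E r)) ^ 2) /
        (N * (N - 1)) := by
    rw [empVar_eq_div hN, sum_syncMap hl ks E.injective x (· ^ 2),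
      sum_syncMap hl ks E.injective x fun t => t]
  simp only [hE, empVar_eq_div hN, ← sum_div, add_sq, mul_add,
    sum_add_distrib, sum_sub_distrib, sum_const, card_univ, nsmul_eq_mul, ← mul_sum]
  have hN₀ : (N : ℝ) ≠ 0 := by positivity
  have hN₁ : (N : ℝ) - 1 ≠ 0 := sub_ne_zero.2 (by exact_mod_cast hN.ne')
  field_simp
  linear_combination ↑N * (↑N - 1) * hquad - 2 * (↑N - 1) * (∑ m, x m) * hlin - hsq

end Average

theorem sum_filter_injective_eq_sum_embedding {β γ M : Type*} [Fintype β] [Fintype γ]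
    [DecidableEq β] [DecidableEq γ] [AddCommMonoid M] (g : (β → γ) → M) :
    ∑ I ∈ univ.filter (fun I : β → γ => Injective I), g I = ∑ E : β ↪ γ, g E := by
  rw [sum_subtype _ (p := fun I => Injective I) (fun I => by simp) g]
  exact Fintype.sum_equiv (Equiv.subtypeInjectiveEquivEmbedding β γ) _ _ fun _ => rfl

theorem card_embedding_fin_eq_prod {k N : ℕ} (hkN : k ≤ N) :
    (Fintype.card (Fin k ↪ Fin N) : ℝ) = ∏ i ∈ range k, ((N : ℝ) - i) := by
  rw [Fintype.card_embedding_eq, Fintype.card_fin, Fintype.card_fin,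
    Nat.descFactorial_eq_prod_range, Nat.cast_prod]
  exact prod_congr rfl fun i hi => Nat.cast_sub (by have := mem_range.1 hi; omega)

theorem stmt_8_general (l : ℕ) (hl : 1 ≤ l) (ks : Fin l → ℕ)
    (N : ℕ) (hN : (∑ j, ks j) ≤ N) (x : Fin N → ℝ) :
    (∑ I ∈ Finset.univ.filter
        (fun I : Fin (∑ j, ks j) → Fin N => Function.Injective I),
        empVar (syncMap hl ks I x)) /
      (∏ i ∈ Finset.range (∑ j, ks j), ((N : ℝ) - (i : ℝ)))
    = (1 - ((∑ j, ((ks j : ℝ)) ^ 2) - ((∑ j, ks j : ℕ) : ℝ)) /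
          ((N : ℝ) * ((N : ℝ) - 1))) * empVar x := by
  have hcard : (Fintype.card (Fin (∑ j, ks j) ↪ Fin N) : ℝ) ≠ 0 :=
    Nat.cast_ne_zero.2 (Fintype.card_pos_iff.2 ⟨Fin.castLEEmb hN⟩).ne'
  rw [sum_filter_injective_eq_sum_embedding fun I => empVar (syncMap hl ks I x),
    ← card_embedding_fin_eq_prod hN, sum_embedding_empVar_syncMap, sum_netInflow_leaderPos_sq,
    mul_assoc, mul_div_cancel_left₀ _ hcard]

/-- contraction lemma for symmetric `k`-particle
synchronization of signature `(k_1,…,k_l)`.  The average of `V(J_I x)` over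
all `N(N−1)⋯(N−k+1)` injective tuples `I` equals `(1 − κ/(N(N−1))) V(x)`,
with `κ = Σ_j k_j² − k`. -/
theorem stmt_8 (l : ℕ) (hl : 1 ≤ l) (ks : Fin l → ℕ) (hks : ∀ j, 2 ≤ ks j)
    (N : ℕ) (hN : (∑ j, ks j) ≤ N) (x : Fin N → ℝ) :
    (∑ I ∈ Finset.univ.filter
        (fun I : Fin (∑ j, ks j) → Fin N => Function.Injective I),
        empVar (syncMap hl ks I x)) /
      (∏ i ∈ Finset.range (∑ j, ks j), ((N : ℝ) - (i : ℝ)))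
    = (1 - ((∑ j, ((ks j : ℝ)) ^ 2) - ((∑ j, ks j : ℕ) : ℝ)) /
          ((N : ℝ) * ((N : ℝ) - 1))) * empVar x :=
  stmt_8_general l hl ks N hN x
end

section
/- Let 0 < k < 1, σ > 0, δ > 0, t > 0 and R₀ ∈ ℝ. Then the Poisson average of the conditional expected empirical variance satisfies the identity Σ_{n=0}^∞ e^{−δt} ((δt)^n/n!) · [ σ² t (1 − k^{n+1}) / ((n+1)(1 − k)) + k^n R₀ ] = (σ²/δ) · (1 − exp(−(1−k)δt))/(1 − k) + exp(−(1−k)δt) · R₀ (in particular the series converges). -/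
/-!
Write `x = δt` and let `p_n(x) = e^{-x} x^n / n!` be the Poisson weights. The series splits into two
Poisson averages, both read off from the exponential series: the probability generating function
`Σ p_n(x) k^n = e^{-(1-k)x}`, and, since `p_n(x) / (n+1) = e^{-x} x^{n+1} / ((n+1)! x)`,
`Σ p_n(x) (1 - k^{n+1}) / (n+1) = e^{-x} ((e^x - 1) - (e^{kx} - 1)) / x = (1 - e^{-(1-k)x}) / x`.
-/

open Real Nat

noncomputable def poissonWeight (x : ℝ) (n : ℕ) : ℝ :=
  exp (-x) * (x ^ n / n !)

theorem hasSum_pow_succ_div_factorial_succ (x : ℝ) :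
    HasSum (fun n : ℕ => x ^ (n + 1) / (n + 1)!) (exp x - 1) := by
  simpa [exp_eq_exp_ℝ] using (hasSum_nat_add_iff' 1).mpr (NormedSpace.expSeries_div_hasSum_exp x)

theorem hasSum_poissonWeight_mul_pow (x k : ℝ) :
    HasSum (fun n => poissonWeight x n * k ^ n) (exp (-(1 - k) * x)) := by
  have h := (NormedSpace.expSeries_div_hasSum_exp (k * x)).mul_left (exp (-x))
  rw [← exp_eq_exp_ℝ, ← exp_add, show -x + k * x = -(1 - k) * x by ring] at h
  refine h.congr_fun fun n => ?_
  rw [poissonWeight, mul_pow]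
  ring

theorem hasSum_poissonWeight_mul_one_sub_pow_succ_div (k : ℝ) {x : ℝ} (hx : x ≠ 0) :
    HasSum (fun n : ℕ => poissonWeight x n * ((1 - k ^ (n + 1)) / (n + 1)))
      ((1 - exp (-(1 - k) * x)) / x) := by
  have h := ((hasSum_pow_succ_div_factorial_succ x).sub
    (hasSum_pow_succ_div_factorial_succ (k * x))).mul_left (exp (-x) / x)
  have hval : exp (-x) / x * (exp x - 1 - (exp (k * x) - 1)) = (1 - exp (-(1 - k) * x)) / x := by
    rw [show -(1 - k) * x = -x + k * x by ring, exp_add, sub_sub_sub_cancel_right, div_mul_eq_mul_div,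
      mul_sub, ← exp_add, neg_add_cancel, exp_zero]
  rw [← hval]
  refine h.congr_fun fun n => ?_
  rw [poissonWeight, factorial_succ, mul_pow, pow_succ, pow_succ]
  push_cast
  field_simp

theorem stmt_14_general (k σ δ t R₀ : ℝ) (hk1 : k < 1)
    (hδ : 0 < δ) (ht : 0 < t) :
    Summable (fun n : ℕ =>
      Real.exp (-δ * t) * ((δ * t) ^ n / (Nat.factorial n)) *
        (σ ^ 2 * t * (1 - k ^ (n + 1)) / (((n : ℝ) + 1) * (1 - k)) + k ^ n * R₀)) ∧
    ∑' n : ℕ,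
      Real.exp (-δ * t) * ((δ * t) ^ n / (Nat.factorial n)) *
        (σ ^ 2 * t * (1 - k ^ (n + 1)) / (((n : ℝ) + 1) * (1 - k)) + k ^ n * R₀)
    = (σ ^ 2 / δ) * (1 - Real.exp (-(1 - k) * δ * t)) / (1 - k)
        + Real.exp (-(1 - k) * δ * t) * R₀ := by
  have hk : 1 - k ≠ 0 := sub_ne_zero.mpr hk1.ne'
  have hx : δ * t ≠ 0 := (mul_pos hδ ht).ne'
  have h := ((hasSum_poissonWeight_mul_one_sub_pow_succ_div k hx).mul_left (σ ^ 2 * t / (1 - k))).add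
    ((hasSum_poissonWeight_mul_pow (δ * t) k).mul_left R₀)
  have hval : σ ^ 2 * t / (1 - k) * ((1 - exp (-(1 - k) * (δ * t))) / (δ * t))
      + R₀ * exp (-(1 - k) * (δ * t))
      = (σ ^ 2 / δ) * (1 - exp (-(1 - k) * δ * t)) / (1 - k) + exp (-(1 - k) * δ * t) * R₀ := by
    rw [← mul_assoc _ δ t]
    field_simp
  rw [hval] at h
  refine (fun key : HasSum _ _ => ⟨key.summable, key.tsum_eq⟩) (h.congr_fun fun n => ?_)
  rw [poissonWeight, neg_mul]
  field_simp

/-- Poisson averaging identity.  For `0 < k < 1`, `σ > 0`,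
`δ > 0`, `t > 0` and `R₀ ∈ ℝ`,
`Σ_{n=0}^∞ e^{−δt} ((δt)^n/n!) [σ² t (1 − k^{n+1})/((n+1)(1−k)) + k^n R₀]
  = (σ²/δ)(1 − e^{−(1−k)δt})/(1−k) + e^{−(1−k)δt} R₀`,
and in particular the series converges. -/
theorem stmt_14 (k σ δ t R₀ : ℝ) (hk0 : 0 < k) (hk1 : k < 1)
    (hσ : 0 < σ) (hδ : 0 < δ) (ht : 0 < t) :
    Summable (fun n : ℕ =>
      Real.exp (-δ * t) * ((δ * t) ^ n / (Nat.factorial n)) *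
        (σ ^ 2 * t * (1 - k ^ (n + 1)) / (((n : ℝ) + 1) * (1 - k)) + k ^ n * R₀)) ∧
    ∑' n : ℕ,
      Real.exp (-δ * t) * ((δ * t) ^ n / (Nat.factorial n)) *
        (σ ^ 2 * t * (1 - k ^ (n + 1)) / (((n : ℝ) + 1) * (1 - k)) + k ^ n * R₀)
    = (σ ^ 2 / δ) * (1 - Real.exp (-(1 - k) * δ * t)) / (1 - k)
        + Real.exp (-(1 - k) * δ * t) * R₀ :=
  stmt_14_general k σ δ t R₀ hk1 hδ ht
end
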